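/- Assume Ann_A(M) = 0. For S ∈ S_E and T ∈ T_E, the derivation d_{S,T} of L = E_∞ is inner (i.e. d_{S,T} = ad(z) for some z ∈ L) if and only if S ∈ E and T ∈ A·id_M; consequently {ad(z) | z ∈ L} ∩ {d_{S,T} | S ∈ S_E, T ∈ T_E} = {d_{S,T} | S ∈ E, T ∈ A·id_M} = {ad(z) | z ∈ L_0}. -/
import Mathlib


/- Purely even case of the paper's super setting: K a commutative unital ring
containing 1/2, A a commutative unital associative K-algebra, M an A-module
(hence also a K-module), q : M × M → A a symmetric A-bilinear form. -/

variable {K A M : Type*} [CommRing K] [Invertible (2 : K)] [CommRing A] [Algebra K A]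
  [AddCommGroup M] [Module A M] [Module K M] [IsScalarTower K A M]
  [SMulCommClass A K M] [SMulCommClass K A M]

variable (K) in
/-- `a·id_M`, viewed as a `K`-linear endomorphism of `M`. -/
def aId (a : A) : Module.End K M := a • (1 : Module.End K M)

variable (K) in
/-- `E_{m,n}(p) = q(n,p)·m − q(m,p)·n`, viewed as a `K`-linear endomorphism of `M`. -/
noncomputable def EmapK (q : M →ₗ[A] M →ₗ[A] A) (m n : M) : Module.End K M :=
  ((q n).restrictScalars K).smulRight m - ((q m).restrictScalars K).smulRight n

variable (K) in
/-- `osp(q)`, realized inside `End_K(M)`: the set of `A`-linear endomorphisms `x`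
of `M` with `q(x(m),n) + q(x(n),m) = 0` for all `m, n`. -/
def ospK (q : M →ₗ[A] M →ₗ[A] A) : Set (Module.End K M) :=
  {x | (∀ (a : A) (p : M), x (a • p) = a • x p) ∧
       ∀ m n : M, q (x m) n + q (x n) m = 0}

variable (K) in
/-- `eosp(q)`: the additive subgroup generated by the `E_{m,n}`. -/
noncomputable def eospK (q : M →ₗ[A] M →ₗ[A] A) : AddSubgroup (Module.End K M) :=
  AddSubgroup.closure {f | ∃ m n : M, f = EmapK K q m n}

variable (K) in
/-- The bracket on `E_∞ = A × M × M × E`, where `E` is a Lie subalgebra of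
`osp(q)` containing `eosp(q)` (given as a `K`-submodule of `End_K(M)` closed
under commutators and containing all `E_{m,n}`):
`[(a,m,n,x),(a',m',n',x')] = (q(m,n') − q(n,m'),
  a·m' + x(m') − a'·m − x'(m), −a·n' + x(n') + a'·n − x'(n),
  E_{m,n'} + E_{n,m'} + [x,x'])`. -/
noncomputable def brEinf (q : M →ₗ[A] M →ₗ[A] A) (E : Submodule K (Module.End K M))
    (hEe : ∀ m n : M, EmapK K q m n ∈ E)
    (hbr : ∀ x ∈ E, ∀ y ∈ E, x * y - y * x ∈ E)
    (u v : A × M × M × E) : A × M × M × E :=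
  (q u.2.1 v.2.2.1 - q u.2.2.1 v.2.1,
   u.1 • v.2.1 + (u.2.2.2 : Module.End K M) v.2.1 - v.1 • u.2.1
     - (v.2.2.2 : Module.End K M) u.2.1,
   -(u.1 • v.2.2.1) + (u.2.2.2 : Module.End K M) v.2.2.1 + v.1 • u.2.2.1
     - (v.2.2.2 : Module.End K M) u.2.2.1,
   ⟨EmapK K q u.2.1 v.2.2.1 + EmapK K q u.2.2.1 v.2.1 +
      ((u.2.2.2 : Module.End K M) * (v.2.2.2 : Module.End K M)
        - (v.2.2.2 : Module.End K M) * (u.2.2.2 : Module.End K M)),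
    add_mem (add_mem (hEe _ _) (hEe _ _)) (hbr _ u.2.2.2.2 _ v.2.2.2.2)⟩)

variable (K) in
/-- `S_E`: the set of `S ∈ End_K(M)` satisfying (S1) `[S, a·id_M] ∈ A·id_M`,
(S2) `[S, q(m,n)·id_M] = (q(S(m),n) + q(S(n),m))·id_M`, and (S3) `[S, E] ⊆ E`. -/
def SE (q : M →ₗ[A] M →ₗ[A] A) (E : Set (Module.End K M)) : Set (Module.End K M) :=
  {S | (∀ a : A, ∃ b : A, S * aId K a - aId K a * S = aId K b) ∧
       (∀ m n : M, S * aId K (q m n) - aId K (q m n) * S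
          = aId K (q (S m) n + q (S n) m)) ∧
       (∀ x ∈ E, S * x - x * S ∈ E)}

variable (K) in
/-- `T_E`: the set of `T ∈ End_K(M)` satisfying (T1) `[T, a·id_M] ∈ E`,
(T2) `[T, q(m,n)·id_M] = E_{T(m),n} + E_{T(n),m}`, and (T3) `[T, E] ⊆ A·id_M`. -/
def TE (q : M →ₗ[A] M →ₗ[A] A) (E : Set (Module.End K M)) : Set (Module.End K M) :=
  {T | (∀ a : A, T * aId K a - aId K a * T ∈ E) ∧
       (∀ m n : M, T * aId K (q m n) - aId K (q m n) * T
          = EmapK K q (T m) n + EmapK K q (T n) m) ∧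
       (∀ x ∈ E, ∃ b : A, T * x - x * T = aId K b)}

variable (K) in
/-- `d = d_{S,T}`: the map `d` on `E_∞ = A × M × M × E` is given by
`d(a, m, n, x) = (σ_S(a) + τ_T(x), (S+T)(m), (S−T)(n), [T, a·id_M] + [S, x])`,
where `σ_S(a)·id_M = [S, a·id_M]` and `τ_T(x)·id_M = [T, x]`. -/
def isDST (q : M →ₗ[A] M →ₗ[A] A) (E : Submodule K (Module.End K M))
    (S T : Module.End K M) (d : (A × M × M × E) → (A × M × M × E)) : Prop :=
  ∀ (a : A) (m n : M) (x : Module.End K M) (hx : x ∈ E) (sa ta : A),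
    S * aId K a - aId K a * S = aId K sa →
    T * x - x * T = aId K ta →
    (d (a, m, n, ⟨x, hx⟩)).1 = sa + ta ∧
    (d (a, m, n, ⟨x, hx⟩)).2.1 = S m + T m ∧
    (d (a, m, n, ⟨x, hx⟩)).2.2.1 = S n - T n ∧
    ((d (a, m, n, ⟨x, hx⟩)).2.2.2 : Module.End K M)
      = (T * aId K a - aId K a * T) + (S * x - x * S)

lemma aId_apply' (a : A) (p : M) : (aId K a : Module.End K M) p = a • p := by
  simp [aId]

lemma aId_zero' : (aId K (0 : A) : Module.End K M) = 0 := by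
  simp [aId]

lemma EmapK_zero_left' (q : M →ₗ[A] M →ₗ[A] A) (n : M) :
    EmapK K q (0 : M) n = 0 := by
  ext p; simp [EmapK]

lemma aId_comm_of_Alinear (a : A) (x : Module.End K M)
    (hx : ∀ (b : A) (p : M), x (b • p) = b • x p) :
    (aId K a : Module.End K M) * x = x * aId K a := by
  ext p; simp [aId, Module.End.mul_apply, hx]

lemma aId_comm_aId (a b : A) :
    (aId K a : Module.End K M) * aId K b = aId K b * aId K a := by
  ext p
  simp [aId, Module.End.mul_apply, smul_smul, mul_comm]

lemma two_smul_cancel' (a b : M) (h : (2 : K) • a = (2 : K) • b) : a = b := by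
  have h2 := congrArg (fun v => (⅟(2 : K)) • v) h
  simpa [invOf_smul_smul] using h2

/-- assume `Ann_A(M) = 0`. For `S ∈ S_E` and `T ∈ T_E`, the
derivation `d_{S,T}` of `L = E_∞` is inner iff `S ∈ E` and `T ∈ A·id_M`;
consequently `ad(L) ∩ {d_{S,T}} = {d_{S,T} | S ∈ E, T ∈ A·id_M} = ad(L_0)`. -/
theorem stmt17 (q : M →ₗ[A] M →ₗ[A] A) (hq : ∀ m n : M, q m n = q n m)
    (hann : ∀ a : A, (∀ p : M, a • p = 0) → a = 0)
    (E : Submodule K (Module.End K M))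
    (hEe : ∀ m n : M, EmapK K q m n ∈ E)
    (hEo : (E : Set (Module.End K M)) ⊆ ospK K q)
    (hbr : ∀ x ∈ E, ∀ y ∈ E, x * y - y * x ∈ E) :
    ∀ (S T : Module.End K M) (d : (A × M × M × E) → (A × M × M × E)),
      S ∈ SE K q (E : Set (Module.End K M)) →
      T ∈ TE K q (E : Set (Module.End K M)) →
      IsLinearMap K d → isDST K q E S T d →
      (((∃ z : A × M × M × E, ∀ u, d u = brEinf K q E hEe hbr z u) ↔
          (S ∈ E ∧ ∃ b : A, T = aId K b)) ∧
        ((∃ z : A × M × M × E, ∀ u, d u = brEinf K q E hEe hbr z u) ↔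
          (∃ z : A × M × M × E, z.2.1 = 0 ∧ z.2.2.1 = 0 ∧
            ∀ u, d u = brEinf K q E hEe hbr z u))) := by
  intro S T d hSE hTE hlin hDST
  -- forward direction
  have fwd : (∃ z : A × M × M × E, ∀ u, d u = brEinf K q E hEe hbr z u) →
      (S ∈ E ∧ ∃ b : A, T = aId K b) := by
    rintro ⟨⟨c, p, r, y⟩, hz⟩
    have h0S : S * aId K (0 : A) - aId K (0 : A) * S = aId K (0 : A) := by
      simp [aId_zero']
    have h0T : T * (0 : Module.End K M) - (0 : Module.End K M) * T = aId K (0 : A) := by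
      simp [aId_zero']
    have hm : ∀ m : M, S m + T m = c • m + (y : Module.End K M) m := by
      intro m
      have h := (hDST 0 m 0 0 E.zero_mem 0 0 h0S h0T).2.1
      rw [hz (0, m, 0, ⟨0, E.zero_mem⟩)] at h
      simpa [brEinf] using h.symm
    have hn : ∀ n : M, S n - T n = -(c • n) + (y : Module.End K M) n := by
      intro n
      have h := (hDST 0 0 n 0 E.zero_mem 0 0 h0S h0T).2.2.1
      rw [hz (0, 0, n, ⟨0, E.zero_mem⟩)] at h
      simpa [brEinf] using h.symm
    have hSy : ∀ m : M, S m = (y : Module.End K M) m := by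
      intro m
      refine two_smul_cancel' (K := K) _ _ ?_
      rw [two_smul, two_smul]
      have := congrArg₂ (· + ·) (hm m) (hn m)
      simpa using by linear_combination (norm := abel) hm m + hn m
    have hTc : ∀ m : M, T m = c • m := by
      intro m
      refine two_smul_cancel' (K := K) _ _ ?_
      rw [two_smul, two_smul]
      linear_combination (norm := abel) hm m - hn m
    constructor
    · have : S = (y : Module.End K M) := LinearMap.ext hSy
      rw [this]; exact y.2
    · exact ⟨c, LinearMap.ext fun m => by rw [hTc m, aId_apply']⟩
  -- backward direction: explicit inner element with zero middle components
  have bwd : ∀ (hSmem : S ∈ E) (b : A), T = aId K b →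
      ∀ u, d u = brEinf K q E hEe hbr (b, 0, 0, ⟨S, hSmem⟩) u := by
    intro hSmem b hTb u
    obtain ⟨a, m, n, x, hx⟩ := u
    have hSA : ∀ (c : A) (p : M), S (c • p) = c • S p := (hEo hSmem).1
    have hxA : ∀ (c : A) (p : M), x (c • p) = c • x p := (hEo hx).1
    have hcommS : S * aId K a - aId K a * S = aId K (0 : A) := by
      rw [aId_comm_of_Alinear a S hSA]; simp [aId_zero']
    have hcommT : T * x - x * T = aId K (0 : A) := by
      rw [hTb, ← aId_comm_of_Alinear b x hxA]; simp [aId_zero']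
    obtain ⟨h1, h2, h3, h4⟩ := hDST a m n x hx 0 0 hcommS hcommT
    have hTcomm : T * aId K a - aId K a * T = 0 := by
      rw [hTb, aId_comm_aId]; simp
    refine Prod.ext ?_ (Prod.ext ?_ (Prod.ext ?_ (Subtype.ext ?_)))
    · rw [h1]; simp [brEinf]
    · rw [h2, hTb]; simp [brEinf, aId_apply']; abel
    · rw [h3, hTb]; simp [brEinf, aId_apply']; abel
    · rw [h4, hTcomm]
      simp [brEinf, EmapK_zero_left']
  have iff1 : (∃ z : A × M × M × E, ∀ u, d u = brEinf K q E hEe hbr z u) ↔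
      (S ∈ E ∧ ∃ b : A, T = aId K b) := by
    constructor
    · exact fwd
    · rintro ⟨hSmem, b, hTb⟩
      exact ⟨(b, 0, 0, ⟨S, hSmem⟩), bwd hSmem b hTb⟩
  refine ⟨iff1, ?_⟩
  constructor
  · intro h
    obtain ⟨hSmem, b, hTb⟩ := iff1.mp h
    exact ⟨(b, 0, 0, ⟨S, hSmem⟩), rfl, rfl, bwd hSmem b hTb⟩
  · rintro ⟨z, -, -, hz⟩
    exact ⟨z, hz⟩
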